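/- arXiv:1405.4784 — 3 statements merged into one kernel-verified Lean document; each statement's English description precedes it below -/
import Mathlib

section
/- There exists a constant C > 0 such that for all sufficiently large real x not an integer, |∑_{n ≤ x} d(n) − (−π²/12 + (log x + 2γ − 1)·x)| ≤ C·x^{1/2}. -/
/-!
Dirichlet's hyperbola method. Counting the lattice points `(a, b)` with `ab ≤ N = ⌊x⌋` on both
sides of the diagonal gives `∑_{n ≤ x} d(n) = 2 ∑_{a ≤ K} ⌊x / a⌋ - K²` with `K = ⌊√x⌋`.
Replacing `⌊x / a⌋` by `x / a` costs `O(K)`, `∑_{a ≤ K} 1 / a = log K + γ + O(1 / K)`, and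
`2 x log K - K² = x log x - x + O((x - K²)² / K²)` with `(x - K²)² / K² = O(1)` because
`K = √x + O(1)`.
-/

open Filter Finset Real

namespace Nat

theorem filter_Ioc_mul_le {b : ℕ} (hb : 0 < b) (K M N : ℕ) :
    {a ∈ Ioc K M | a * b ≤ N} = Ioc K (min M (N / b)) := by
  ext a
  simp only [mem_filter, mem_Ioc, le_min_iff, Nat.le_div_iff_mul_le hb, and_assoc]

theorem sum_Ioc_div_add_sqrt_sq (N : ℕ) :
    ∑ a ∈ Ioc 0 N, N / a + N.sqrt ^ 2 = 2 * ∑ a ∈ Ioc 0 N.sqrt, N / a := by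
  set K := N.sqrt
  have hK_le_div : ∀ b ∈ Ioc 0 K, K ≤ N / b := fun b hb ↦
    (Nat.le_div_iff_mul_le (mem_Ioc.1 hb).1).2
      ((Nat.mul_le_mul_left K (mem_Ioc.1 hb).2).trans (Nat.sqrt_le N))
  -- Both sides count `{(a, b) : K < a ≤ N, 0 < b ≤ K, a * b ≤ N}`.
  have tail : ∑ a ∈ Ioc K N, N / a = ∑ b ∈ Ioc 0 K, (N / b - K) := by
    calc ∑ a ∈ Ioc K N, N / a = ∑ a ∈ Ioc K N, #{b ∈ Ioc 0 K | b * a ≤ N} := by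
          refine sum_congr rfl fun a ha ↦ ?_
          obtain ⟨hKa, -⟩ := mem_Ioc.1 ha
          have : N / a ≤ K := Nat.lt_succ_iff.1 <| (Nat.div_lt_iff_lt_mul (by omega)).2 <|
            (Nat.lt_succ_sqrt N).trans_le (Nat.mul_le_mul_left _ hKa)
          rw [filter_Ioc_mul_le (by omega), card_Ioc, min_eq_right this, Nat.sub_zero]
      _ = ∑ b ∈ Ioc 0 K, #{a ∈ Ioc K N | a * b ≤ N} := by
          simp only [card_filter]
          rw [sum_comm]
          simp only [mul_comm]
      _ = ∑ b ∈ Ioc 0 K, (N / b - K) := sum_congr rfl fun b hb ↦ by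
          rw [filter_Ioc_mul_le (mem_Ioc.1 hb).1, card_Ioc, min_eq_right (Nat.div_le_self N b)]
  have tail_add_sq : ∑ b ∈ Ioc 0 K, (N / b - K) + K ^ 2 = ∑ b ∈ Ioc 0 K, N / b := by
    calc ∑ b ∈ Ioc 0 K, (N / b - K) + K ^ 2 = ∑ b ∈ Ioc 0 K, (N / b - K + K) := by
          rw [sum_add_distrib, sum_const, Nat.card_Ioc, Nat.sub_zero, smul_eq_mul, sq]
      _ = ∑ b ∈ Ioc 0 K, N / b := sum_congr rfl fun b hb ↦ Nat.sub_add_cancel (hK_le_div b hb)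
  rw [← sum_Ioc_consecutive _ (Nat.zero_le K) (Nat.sqrt_le_self N), tail, add_assoc, tail_add_sq,
    two_mul]

theorem sum_Icc_card_divisors_add_sqrt_sq (N : ℕ) :
    ∑ n ∈ Icc 1 N, #n.divisors + N.sqrt ^ 2 = 2 * ∑ a ∈ Icc 1 N.sqrt, N / a := by
  simp only [show ∀ m, Icc 1 m = Ioc 0 m from Icc_add_one_left_eq_Ioc 0,
    ← ArithmeticFunction.sigma_zero_apply, ArithmeticFunction.sum_Ioc_sigma0_eq_sum_div,
    sum_Ioc_div_add_sqrt_sq]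

end Nat

theorem Real.nat_floor_real_sqrt_eq_nat_sqrt_floor {x : ℝ} (hx : 0 ≤ x) :
    ⌊√x⌋₊ = Nat.sqrt ⌊x⌋₊ := by
  rw [Nat.floor_eq_iff (sqrt_nonneg x), sqrt_lt' (by positivity)]
  refine ⟨nat_sqrt_le_real_sqrt.trans (sqrt_le_sqrt (Nat.floor_le hx)), ?_⟩
  exact (Nat.lt_floor_add_one x).trans_le <| by
    exact_mod_cast Nat.succ_le_of_lt (Nat.lt_succ_sqrt' _)

theorem sum_Icc_card_divisors_eq_two_mul_sum_floor_div_sub {x : ℝ} (hx : 0 ≤ x) :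
    ∑ n ∈ Icc 1 ⌊x⌋₊, (#n.divisors : ℝ) =
      2 * ∑ a ∈ Icc 1 ⌊√x⌋₊, (⌊x / a⌋₊ : ℝ) - (⌊√x⌋₊ : ℝ) ^ 2 := by
  simp only [nat_floor_real_sqrt_eq_nat_sqrt_floor hx, Nat.floor_div_natCast]
  rw [eq_sub_iff_add_eq]
  exact_mod_cast Nat.sum_Icc_card_divisors_add_sqrt_sq ⌊x⌋₊

theorem abs_sum_Icc_floor_div_sub_mul_harmonic_le {x : ℝ} (hx : 0 ≤ x) (K : ℕ) :
    |∑ a ∈ Icc 1 K, (⌊x / a⌋₊ : ℝ) - x * harmonic K| ≤ K := by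
  have hfloor : ∀ y : ℝ, 0 ≤ y → |(⌊y⌋₊ : ℝ) - y| ≤ 1 := fun y hy ↦ by
    rw [abs_sub_comm, abs_of_nonneg (sub_nonneg.2 (Nat.floor_le hy))]
    linarith [Nat.sub_one_lt_floor y]
  calc |∑ a ∈ Icc 1 K, (⌊x / a⌋₊ : ℝ) - x * harmonic K|
      = |∑ a ∈ Icc 1 K, ((⌊x / a⌋₊ : ℝ) - x / a)| := by
        simp only [harmonic_eq_sum_Icc, Rat.cast_sum, Rat.cast_inv, Rat.cast_natCast, mul_sum,
          sum_sub_distrib, div_eq_mul_inv]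
    _ ≤ ∑ a ∈ Icc 1 K, (1 : ℝ) := (abs_sum_le_sum_abs _ _).trans <|
        sum_le_sum fun a _ ↦ hfloor _ (by positivity)
    _ = K := by simp

theorem abs_harmonic_sub_log_sub_eulerMascheroniConstant_le {K : ℕ} (hK : K ≠ 0) :
    |(harmonic K : ℝ) - log K - eulerMascheroniConstant| ≤ 1 / K := by
  have hK' : (0 : ℝ) < K := by positivity
  have lower := eulerMascheroniConstant_lt_eulerMascheroniSeq' K
  have upper := eulerMascheroniSeq_lt_eulerMascheroniConstant K
  rw [eulerMascheroniSeq', if_neg hK] at lower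
  rw [eulerMascheroniSeq] at upper
  have hlog : log (K + 1) - log K ≤ 1 / K := by
    rw [← log_div (by positivity) hK'.ne']
    linarith [log_le_sub_one_of_pos (show (0 : ℝ) < (K + 1) / K by positivity),
      show ((K : ℝ) + 1) / K - 1 = 1 / K by field_simp; ring]
  rw [abs_le]
  constructor <;> linarith [one_div_pos.2 hK']

theorem abs_mul_log_div_add_sub_le {x y : ℝ} (hx : 0 < x) (hy : 0 < y) :
    |x * log (y / x) + x - y| ≤ (x - y) ^ 2 / y := by
  have upper : x * log (y / x) ≤ x * (y / x - 1) :=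
    mul_le_mul_of_nonneg_left (log_le_sub_one_of_pos (by positivity)) hx.le
  have lower : x * (1 - (y / x)⁻¹) ≤ x * log (y / x) :=
    mul_le_mul_of_nonneg_left (one_sub_inv_le_log_of_pos (by positivity)) hx.le
  have e1 : x * (y / x - 1) = y - x := by field_simp
  have e2 : x * (1 - (y / x)⁻¹) = y - x - (x - y) ^ 2 / y := by field_simp; ring
  rw [abs_le]
  constructor <;> nlinarith [div_nonneg (sq_nonneg (x - y)) hy.le]

theorem abs_sum_Icc_card_divisors_sub_le {x : ℝ} (hx : 4 ≤ x) :
    |∑ n ∈ Icc 1 ⌊x⌋₊, (#n.divisors : ℝ) -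
        (-π ^ 2 / 12 + (log x + 2 * eulerMascheroniConstant - 1) * x)| ≤ 15 * √x := by
  set s := √x
  set K := ⌊s⌋₊
  set k := (K : ℝ)
  set T := ∑ a ∈ Icc 1 K, (⌊x / a⌋₊ : ℝ)
  set H := (harmonic K : ℝ)
  have hx0 : 0 < x := by linarith
  have hs : 2 ≤ s := (le_sqrt' two_pos).2 (by linarith)
  have hss : s ^ 2 = x := sq_sqrt hx0.le
  have hks : k ≤ s := Nat.floor_le (sqrt_nonneg x)
  have hsk : s < k + 1 := Nat.lt_floor_add_one s
  have hk : 0 < k := by linarith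
  have eT := abs_sum_Icc_floor_div_sub_mul_harmonic_le hx0.le K
  have eH := abs_harmonic_sub_log_sub_eulerMascheroniConstant_le (Nat.cast_pos.1 hk).ne'
  have eL := abs_mul_log_div_add_sub_le hx0 (pow_pos hk 2)
  have bH : |2 * x * (H - log k - eulerMascheroniConstant)| ≤ 4 * s := by
    rw [abs_mul, abs_of_pos (by positivity)]
    calc 2 * x * |H - log k - eulerMascheroniConstant| ≤ 2 * x * (1 / k) := by gcongr
      _ ≤ 4 * s := by rw [mul_one_div, div_le_iff₀ hk]; nlinarith
  have bL : (x - k ^ 2) ^ 2 / k ^ 2 ≤ 16 := by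
    have h0 : 0 ≤ x - k ^ 2 := by nlinarith
    have h4 : x - k ^ 2 ≤ 4 * k := by nlinarith
    rw [div_le_iff₀ (by positivity)]
    nlinarith
  have bπ : π ^ 2 / 12 ≤ 2 := by nlinarith [pi_lt_four, pi_pos]
  have hdecomp : 2 * T - k ^ 2 - (-π ^ 2 / 12 + (log x + 2 * eulerMascheroniConstant - 1) * x) =
      2 * (T - x * H) + 2 * x * (H - log k - eulerMascheroniConstant) +
        (x * log (k ^ 2 / x) + x - k ^ 2) + π ^ 2 / 12 := by
    rw [log_div (by positivity) hx0.ne', log_pow]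
    push_cast
    ring
  rw [sum_Icc_card_divisors_eq_two_mul_sum_floor_div_sub hx0.le, hdecomp]
  rw [abs_le] at eT bH eL ⊢
  constructor <;> linarith [sq_nonneg π]

/-- There exists `C > 0` such that for all sufficiently large real `x`
not an integer, `|∑_{n ≤ x} d(n) − (−π²/12 + (log x + 2γ − 1)x)| ≤ C x^{1/2}`. -/
theorem divisor_summatory_error_unconditional :
    ∃ C : ℝ, 0 < C ∧ ∀ᶠ x : ℝ in atTop, (∀ n : ℤ, x ≠ n) →
      |(∑ n ∈ Finset.Icc 1 ⌊x⌋₊, (n.divisors.card : ℝ)) -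
        (-(Real.pi) ^ 2 / 12 + (Real.log x + 2 * Real.eulerMascheroniConstant - 1) * x)| ≤
        C * x ^ ((1 : ℝ) / 2) := by
  refine ⟨15, by norm_num, ?_⟩
  filter_upwards [eventually_ge_atTop 4] with x hx _
  rw [← sqrt_eq_rpow]
  exact abs_sum_Icc_card_divisors_sub_le hx
end

section
/- For every complex number s with Re(s) > 1, ∑_{n ≥ 1} d(n)²/n^s = ζ(s)⁴/ζ(2s). -/
/-!
Both `𝟙□ * d²` (with `𝟙□` the indicator of the squares) and `d * d` are multiplicative, and at a
prime power `p ^ k` both equal `(k + 1)(k + 2)(k + 3) / 6`. Taking L-series gives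
`ζ(2s) · L(d², s) = L(d, s)² = ζ(s)⁴`. The series `L(d², s)` converges because
`d(n)² ≤ (d * d)(n)`, the term of `(𝟙□ * d²)(n)` at the divisor `1`.
-/

open Finset

namespace Nat

theorem Coprime.isSquare_mul_iff {m n : ℕ} (h : m.Coprime n) :
    IsSquare (m * n) ↔ IsSquare m ∧ IsSquare n := by
  refine ⟨fun ⟨r, hr⟩ => ?_, fun ⟨hm, hn⟩ => hm.mul hn⟩
  rw [← sq] at hr
  obtain ⟨a, rfl⟩ := exists_eq_pow_of_mul_eq_pow (Nat.isUnit_iff.mpr h) hr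
  obtain ⟨b, rfl⟩ :=
    exists_eq_pow_of_mul_eq_pow (Nat.isUnit_iff.mpr h.symm) ((mul_comm _ _).trans hr)
  exact ⟨⟨a, sq a⟩, ⟨b, sq b⟩⟩

theorem Prime.isSquare_pow_iff {p k : ℕ} (hp : p.Prime) : IsSquare (p ^ k) ↔ Even k := by
  refine ⟨fun ⟨r, hr⟩ => ?_, fun hk => hk.isSquare_pow p⟩
  obtain ⟨j, -, rfl⟩ := (Nat.dvd_prime_pow hp).1 (Dvd.intro _ hr.symm)
  rw [← pow_add, Nat.pow_right_inj hp.one_lt] at hr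
  exact ⟨j, hr⟩

theorem two_mul_sum_antidiagonal_snd_add_one (k : ℕ) :
    2 * ∑ ij ∈ antidiagonal k, (ij.2 + 1) = (k + 1) * (k + 2) := by
  induction k with
  | zero => simp
  | succ k ih =>
    rw [Finset.Nat.sum_antidiagonal_succ, mul_add, ih]
    ring

theorem six_mul_sum_antidiagonal_add_one_mul_add_one (k : ℕ) :
    6 * ∑ ij ∈ antidiagonal k, (ij.1 + 1) * (ij.2 + 1) = (k + 1) * (k + 2) * (k + 3) := by
  induction k with
  | zero => simp
  | succ k ih =>
    have hsplit : ∑ ij ∈ antidiagonal k, (ij.1 + 1 + 1) * (ij.2 + 1) =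
        ∑ ij ∈ antidiagonal k, (ij.1 + 1) * (ij.2 + 1) + ∑ ij ∈ antidiagonal k, (ij.2 + 1) := by
      rw [← sum_add_distrib]
      exact sum_congr rfl fun _ _ => by ring
    rw [Finset.Nat.sum_antidiagonal_succ, hsplit]
    linarith [two_mul_sum_antidiagonal_snd_add_one k]

theorem six_mul_sum_antidiagonal_even_mul_sq (k : ℕ) :
    6 * ∑ ij ∈ antidiagonal k, (if Even ij.1 then 1 else 0) * (ij.2 + 1) ^ 2 =
      (k + 1) * (k + 2) * (k + 3) := by
  induction k using Nat.twoStepInduction with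
  | zero => simp
  | one => simp [Finset.Nat.sum_antidiagonal_succ]
  | more k ih _ =>
    rw [Finset.Nat.sum_antidiagonal_succ, Finset.Nat.sum_antidiagonal_succ]
    simp only [Nat.even_add_one, not_not, Even.zero, not_true_eq_false, ↓reduceIte, one_mul,
      zero_mul, zero_add, mul_add, ih]
    ring

theorem sum_antidiagonal_even_mul_sq (k : ℕ) :
    ∑ ij ∈ antidiagonal k, (if Even ij.1 then 1 else 0) * (ij.2 + 1) ^ 2 =
      ∑ ij ∈ antidiagonal k, (ij.1 + 1) * (ij.2 + 1) :=
  Nat.eq_of_mul_eq_mul_left (by norm_num : 0 < 6) <|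
    (six_mul_sum_antidiagonal_even_mul_sq k).trans
      (six_mul_sum_antidiagonal_add_one_mul_add_one k).symm

end Nat

open scoped ArithmeticFunction.sigma ArithmeticFunction.zeta

namespace ArithmeticFunction

theorem mul_apply_prime_pow {R : Type*} [Semiring R] (f g : ArithmeticFunction R) {p : ℕ}
    (hp : p.Prime) (k : ℕ) :
    (f * g) (p ^ k) = ∑ ij ∈ antidiagonal k, f (p ^ ij.1) * g (p ^ ij.2) := by
  rw [mul_apply, Nat.sum_divisorsAntidiagonal (fun a b => f a * g b),
    Nat.sum_divisors_prime_pow hp, Finset.Nat.sum_antidiagonal_eq_sum_range_succ_mk]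
  refine sum_congr rfl fun i hi => ?_
  rw [Nat.pow_div (Nat.lt_succ_iff.mp (mem_range.mp hi)) hp.pos]

def squareIndicator : ArithmeticFunction ℕ :=
  ⟨fun n => if n ≠ 0 ∧ IsSquare n then 1 else 0, by simp⟩

theorem squareIndicator_apply (n : ℕ) :
    squareIndicator n = if n ≠ 0 ∧ IsSquare n then 1 else 0 := rfl

theorem squareIndicator_apply_sq {m : ℕ} (hm : m ≠ 0) : squareIndicator (m ^ 2) = 1 := by
  simp [squareIndicator_apply, hm, IsSquare.sq]

theorem squareIndicator_apply_prime_pow {p : ℕ} (hp : p.Prime) (k : ℕ) :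
    squareIndicator (p ^ k) = if Even k then 1 else 0 := by
  simp [squareIndicator_apply, hp.ne_zero, hp.isSquare_pow_iff]

theorem isMultiplicative_squareIndicator : squareIndicator.IsMultiplicative := by
  refine ⟨by simp [squareIndicator_apply], fun {m n} h => ?_⟩
  simp only [squareIndicator_apply, mul_ne_zero_iff, h.isSquare_mul_iff]
  split_ifs <;> tauto

theorem squareIndicator_mul_pmul_sigma_zero :
    squareIndicator * pmul (σ 0) (σ 0) = σ 0 * σ 0 := by
  have hσ := isMultiplicative_sigma (k := 0)
  refine (IsMultiplicative.eq_iff_eq_on_prime_powers _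
    (isMultiplicative_squareIndicator.mul (hσ.pmul hσ)) _ (hσ.mul hσ)).mpr fun p k hp => ?_
  simp only [mul_apply_prime_pow _ _ hp, pmul_apply, squareIndicator_apply_prime_pow hp,
    sigma_zero_apply_prime_pow hp]
  simpa only [sq] using Nat.sum_antidiagonal_even_mul_sq k

theorem pmul_sigma_zero_le (n : ℕ) : pmul (σ 0) (σ 0) n ≤ (σ 0 * σ 0) n := by
  rcases eq_or_ne n 0 with rfl | hn
  · simp
  rw [← squareIndicator_mul_pmul_sigma_zero, mul_apply]
  calc pmul (σ 0) (σ 0) n = squareIndicator 1 * pmul (σ 0) (σ 0) n := by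
        simp [squareIndicator_apply]
    _ ≤ _ := single_le_sum (f := fun x => squareIndicator x.1 * pmul (σ 0) (σ 0) x.2)
        (fun _ _ => Nat.zero_le _) (a := (1, n)) (Nat.mem_divisorsAntidiagonal.mpr ⟨one_mul n, hn⟩)

theorem sigma_zero_eq_zeta_mul_zeta : σ 0 = ζ * ζ := by
  rw [← zeta_mul_pow_eq_sigma, pow_zero_eq_zeta]

open scoped LSeries.notation

theorem natCoe_mul_eq_convolution (f g : ArithmeticFunction ℕ) : ↗(f * g) = ↗f ⍟ ↗g := by
  have := coe_mul (f : ArithmeticFunction ℂ) g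
  rw [← natCoe_mul] at this
  exact this.symm

end ArithmeticFunction

open ArithmeticFunction LSeries
open scoped LSeries.notation

theorem LSeries_eq_tsum_pnat (f : ℕ → ℂ) (s : ℂ) :
    LSeries f s = ∑' n : ℕ+, f n / (n : ℂ) ^ s := by
  rw [LSeries, ← tsum_pnat_eq_tsum_of_eq_zero (term_zero f s)]
  exact tsum_congr fun n => term_of_ne_zero n.ne_zero f s

theorem LSeriesSummable.of_natCast_le {f g : ℕ → ℕ} {s : ℂ} (hg : LSeriesSummable ↗g s)
    (h : ∀ n, f n ≤ g n) : LSeriesSummable ↗f s :=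
  hg.norm.of_norm_bounded fun n => norm_term_le s (by simpa using h n)

theorem LSeriesHasSum_sigma_zero {s : ℂ} (hs : 1 < s.re) :
    LSeriesHasSum ↗(σ 0) s (riemannZeta s ^ 2) := by
  rw [sigma_zero_eq_zeta_mul_zeta, natCoe_mul_eq_convolution, sq]
  exact (LSeriesHasSum_zeta hs).convolution (LSeriesHasSum_zeta hs)

theorem LSeriesHasSum_squareIndicator {s : ℂ} (hs : 1 / 2 < s.re) :
    LSeriesHasSum ↗squareIndicator s (riemannZeta (2 * s)) := by
  have h2s : 1 < (2 * s).re := by simp; linarith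
  have hsq : term ↗squareIndicator s ∘ (· ^ 2) = term ↗ζ (2 * s) := by
    ext m
    rcases eq_or_ne m 0 with rfl | hm
    · simp
    rw [Function.comp_apply, term_of_ne_zero (pow_ne_zero 2 hm), term_of_ne_zero hm,
      squareIndicator_apply_sq hm, zeta_apply_ne hm, Nat.cast_pow,
      ← Complex.natCast_cpow_natCast_mul]
    norm_num
  refine (Nat.pow_left_injective two_ne_zero).hasSum_iff (fun n hn_range => ?_) |>.mp
    (by rw [hsq]; exact LSeriesHasSum_zeta h2s)
  rcases eq_or_ne n 0 with rfl | hn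
  · exact term_zero _ _
  rw [term_of_ne_zero hn, squareIndicator_apply, if_neg, Nat.cast_zero, zero_div]
  rintro ⟨-, r, rfl⟩
  exact hn_range ⟨r, sq r⟩

/-- For every complex `s` with `Re(s) > 1`,
`∑_{n ≥ 1} d(n)²/n^s = ζ(s)⁴/ζ(2s)`. -/
theorem dirichlet_series_divisor_squared (s : ℂ) (hs : 1 < s.re) :
    ∑' n : ℕ+, (((n : ℕ).divisors.card : ℂ)) ^ 2 / ((n : ℕ) : ℂ) ^ s =
      riemannZeta s ^ 4 / riemannZeta (2 * s) := by
  have hsq := LSeriesHasSum_squareIndicator (s := s) (by linarith)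
  have hσ := LSeriesHasSum_sigma_zero hs
  have hσσ : LSeriesHasSum ↗(σ 0 * σ 0) s (riemannZeta s ^ 4) := by
    rw [natCoe_mul_eq_convolution, show riemannZeta s ^ 4 = riemannZeta s ^ 2 * riemannZeta s ^ 2
      by ring]
    exact hσ.convolution hσ
  have hpmul : LSeriesSummable ↗(pmul (σ 0) (σ 0)) s :=
    hσσ.LSeriesSummable.of_natCast_le pmul_sigma_zero_le
  have hprod : riemannZeta (2 * s) * LSeries ↗(pmul (σ 0) (σ 0)) s = riemannZeta s ^ 4 := by
    rw [← hsq.LSeries_eq, ← LSeries_convolution' hsq.LSeriesSummable hpmul,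
      ← natCoe_mul_eq_convolution, squareIndicator_mul_pmul_sigma_zero, hσσ.LSeries_eq]
  rw [eq_div_iff (riemannZeta_ne_zero_of_one_lt_re (by simp; linarith)), ← hprod, mul_comm,
    LSeries_eq_tsum_pnat]
  simp [sigma_zero_apply, sq]
end

section
/- The limit superior, as the positive integer n tends to infinity, of (log d(n) · log log n)/(log n) equals log 2. -/
/-!
Write `log d(n) = ∑_{p ∣ n} log (a_p + 1)` and split the primes at `y = (log n)^c`, `c < 1`.
There are at most `y` small primes, each contributing `O(log log n)`; for a large prime
`log (a_p + 1) ≤ a_p log 2`, and `∑ a_p ≤ log n / log y` over those. Hence the ratio is at most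
`log 2 / c + o(1)`. Conversely the primorial `N = x#` has `d(N) = 2^π(x)` and
`log N = θ(x) ≤ π(x) log x`, so its ratio is at least `log 2 · log θ(x) / log x`, which tends to
`log 2` by Chebyshev's bound `θ(x) ≥ x / 4`.
-/

open Filter Finset Real Chebyshev
open scoped Topology

namespace Nat

theorem sum_factorization_mul_log (n : ℕ) :
    ∑ p ∈ n.primeFactors, (n.factorization p : ℝ) * Real.log p = Real.log n := by
  rw [log_nat_eq_sum_factorization, Finsupp.sum, support_factorization]

theorem factorization_le_log_two (n p : ℕ) : n.factorization p ≤ Nat.log 2 n := by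
  rcases eq_or_ne n 0 with rfl | hn
  · simp
  by_cases hp : p.Prime
  · exact le_log_of_pow_le one_lt_two
      ((Nat.pow_le_pow_left hp.two_le _).trans (ordProj_le p hn))
  · simp [factorization_eq_zero_of_not_prime n hp]

theorem factorization_le_logb_two (n p : ℕ) : (n.factorization p : ℝ) ≤ Real.logb 2 n := by
  simpa using (cast_le.2 (factorization_le_log_two n p)).trans (natLog_le_logb n 2)

theorem log_card_divisors {n : ℕ} (hn : n ≠ 0) :
    Real.log #n.divisors = ∑ p ∈ n.primeFactors, Real.log (n.factorization p + 1) := by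
  rw [card_divisors hn, cast_prod, log_prod fun p _ => by positivity]
  push_cast
  rfl

theorem card_divisors_of_squarefree {n : ℕ} (hn : Squarefree n) :
    #n.divisors = 2 ^ #n.primeFactors := by
  rw [card_divisors hn.ne_zero, ← prod_const]
  refine prod_congr rfl fun p hp => ?_
  rw [factorization_eq_one_of_squarefree hn (prime_of_mem_primeFactors hp)
    (dvd_of_mem_primeFactors hp)]

theorem card_divisors_primorial (n : ℕ) : #(primorial n).divisors = 2 ^ n.primeCounting := by
  rw [card_divisors_of_squarefree (squarefree_primorial n), primeFactors_primorial,
    primesLE_card_eq_primeCounting]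

end Nat

theorem Real.log_natCast_add_one_le_mul_log_two (a : ℕ) : log (a + 1) ≤ a * log 2 := by
  rw [← log_pow]
  exact log_le_log (by positivity) (mod_cast Nat.lt_two_pow_self)

theorem card_primeFactors_filter_le {n : ℕ} {y : ℝ} (hy : 0 ≤ y) :
    (#{p ∈ n.primeFactors | ((p : ℕ) : ℝ) ≤ y} : ℝ) ≤ y := by
  have hsub : {p ∈ n.primeFactors | ((p : ℕ) : ℝ) ≤ y} ⊆ Icc 1 ⌊y⌋₊ := fun p hp => by
    rw [mem_filter, Nat.mem_primeFactors] at hp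
    exact mem_Icc.2 ⟨hp.1.1.one_lt.le, Nat.le_floor hp.2⟩
  calc (#{p ∈ n.primeFactors | ((p : ℕ) : ℝ) ≤ y} : ℝ) ≤ ⌊y⌋₊ := by
        exact_mod_cast (card_le_card hsub).trans_eq (Nat.card_Icc 1 _)
    _ ≤ y := Nat.floor_le hy

theorem sum_log_succ_factorization_filter_le (n : ℕ) {y : ℝ} (hy : 0 ≤ y) :
    ∑ p ∈ n.primeFactors with ((p : ℕ) : ℝ) ≤ y, log (n.factorization p + 1) ≤
      y * log (logb 2 n + 1) := by
  have hterm : ∀ p ∈ {p ∈ n.primeFactors | ((p : ℕ) : ℝ) ≤ y},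
      log (n.factorization p + 1) ≤ log (logb 2 n + 1) := fun p _ => by
    gcongr
    exact n.factorization_le_logb_two p
  grw [sum_le_card_nsmul _ _ _ hterm, nsmul_eq_mul, card_primeFactors_filter_le hy]
  have : (0 : ℝ) ≤ logb 2 n := by simpa using (Nat.cast_nonneg _).trans (natLog_le_logb n 2)
  exact log_nonneg (by linarith)

theorem sum_log_succ_factorization_filter_gt (n : ℕ) {y : ℝ} (hy : 1 < y) :
    ∑ p ∈ n.primeFactors with ¬((p : ℕ) : ℝ) ≤ y, log (n.factorization p + 1) ≤
      log 2 * (log n / log y) := by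
  have hlogy : 0 < log y := log_pos hy
  calc ∑ p ∈ n.primeFactors with ¬((p : ℕ) : ℝ) ≤ y, log (n.factorization p + 1)
      ≤ ∑ p ∈ n.primeFactors with ¬((p : ℕ) : ℝ) ≤ y, (n.factorization p : ℝ) * log 2 :=
        sum_le_sum fun p _ => log_natCast_add_one_le_mul_log_two _
    _ = log 2 * ((∑ p ∈ n.primeFactors with ¬((p : ℕ) : ℝ) ≤ y,
          (n.factorization p : ℝ) * log y) / log y) := by
        rw [← sum_mul, ← sum_mul, mul_div_cancel_right₀ _ hlogy.ne', mul_comm]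
    _ ≤ log 2 * (log n / log y) := by
        gcongr
        rw [← Nat.sum_factorization_mul_log]
        refine (sum_le_sum fun p hp => ?_).trans
          (sum_le_sum_of_subset_of_nonneg (filter_subset _ _) fun p hp _ => ?_)
        · rw [mem_filter, not_le] at hp
          gcongr
          exact hp.2.le
        · have := (Nat.prime_of_mem_primeFactors hp).one_lt
          positivity

theorem log_card_divisors_le {n : ℕ} (hn : n ≠ 0) {y : ℝ} (hy : 1 < y) :
    log #n.divisors ≤ y * log (logb 2 n + 1) + log 2 * (log n / log y) := by
  rw [Nat.log_card_divisors hn, ← sum_filter_add_sum_filter_not _ fun p : ℕ => (p : ℝ) ≤ y]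
  exact add_le_add (sum_log_succ_factorization_filter_le n (by linarith))
    (sum_log_succ_factorization_filter_gt n hy)

theorem log_logb_two_add_one_le {x : ℝ} (hx : 3 ≤ log x) :
    log (logb 2 x + 1) ≤ 2 * log (log x) := by
  have hlog2 : 0 < log 2 := log_pos one_lt_two
  have hpos : 0 < logb 2 x + 1 := by rw [logb]; positivity
  have hsq : logb 2 x + 1 ≤ log x ^ 2 := by
    rw [logb, div_add_one hlog2.ne', div_le_iff₀ hlog2]
    nlinarith [log_two_lt_d9, log_two_gt_d9, mul_le_mul_of_nonneg_right hx hlog2.le]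
  calc log (logb 2 x + 1) ≤ log (log x ^ 2) := log_le_log hpos hsq
    _ = 2 * log (log x) := by simp [log_pow]

theorem tendsto_log_sq_div_rpow_atTop {s : ℝ} (hs : 0 < s) :
    Tendsto (fun x => log x ^ 2 / x ^ s) atTop (𝓝 0) := by
  simpa only [rpow_two] using (isLittleO_log_rpow_rpow_atTop 2 hs).tendsto_div_nhds_zero

theorem tendsto_log_natCast_atTop : Tendsto (fun n : ℕ => log n) atTop atTop :=
  tendsto_log_atTop.comp tendsto_natCast_atTop_atTop

theorem Chebyshev.eventually_div_four_le_theta : ∀ᶠ n : ℕ in atTop, (n : ℝ) / 4 ≤ θ n := by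
  have hlog : ∀ᶠ x : ℝ in atTop, log x ≤ 1 / 10 * √x := by
    filter_upwards [(isLittleO_log_rpow_atTop (by norm_num : (0 : ℝ) < 1 / 2)).bound
      (by norm_num : (0 : ℝ) < 1 / 10), eventually_ge_atTop 1] with x hx hx1
    rwa [norm_of_nonneg (log_nonneg hx1), norm_of_nonneg (by positivity), ← sqrt_eq_rpow] at hx
  filter_upwards [tendsto_natCast_atTop_atTop.eventually hlog, eventually_ge_atTop 2]
    with n hn hn2
  have hn2' : (2 : ℝ) ≤ n := by exact_mod_cast hn2
  have hlogn : 0 ≤ log n := log_natCast_nonneg n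
  have hsqrt : 1 ≤ √(n : ℝ) := one_le_sqrt.2 (by linarith)
  have hlog_succ : log (n + 1) ≤ 2 * log n := by
    calc log (n + 1) ≤ log ((n : ℝ) ^ 2) := log_le_log (by positivity) (by nlinarith)
      _ = 2 * log n := by simp [log_pow]
  have hlog_le : log n ≤ √n * log n := le_mul_of_one_le_left hlogn hsqrt
  have hsqrt_mul_log : √n * log n ≤ 1 / 10 * n := by
    calc √n * log n ≤ √n * (1 / 10 * √n) := by gcongr
      _ = 1 / 10 * n := by rw [mul_left_comm, mul_self_sqrt (by positivity)]
  have hlog2 : (n : ℝ) * 0.69 ≤ n * log 2 := by gcongr; linarith [log_two_gt_d9]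
  linarith [theta_ge n]

noncomputable def divisorRatio (n : ℕ) : ℝ :=
  log #n.divisors * log (log n) / log n

theorem divisorRatio_le {n : ℕ} (hn : 3 ≤ log n) {c : ℝ} (hc : 0 < c) :
    divisorRatio n ≤ 2 * log (log n) ^ 2 / log n ^ (1 - c) + log 2 / c := by
  set L := log n with hLdef
  have hL : 1 < L := by linarith
  have hn0 : n ≠ 0 := by rintro rfl; simp [hLdef] at hn; linarith
  have hLL : 0 < log L := log_pos hL
  have hy : 1 < L ^ c := one_lt_rpow hL hc
  have hsmall : log (logb 2 n + 1) ≤ 2 * log L := log_logb_two_add_one_le hn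
  have hbound := log_card_divisors_le hn0 hy
  rw [log_rpow (by linarith)] at hbound
  calc divisorRatio n ≤ (L ^ c * (2 * log L) + log 2 * (L / (c * log L))) * log L / L := by
        unfold divisorRatio
        gcongr
        exact hbound.trans (by gcongr)
    _ = 2 * log L ^ 2 / L ^ (1 - c) + log 2 / c := by
        rw [rpow_sub (by positivity), rpow_one]
        field_simp

theorem eventually_divisorRatio_le {ε : ℝ} (hε : 0 < ε) :
    ∀ᶠ n : ℕ in atTop, divisorRatio n ≤ log 2 + ε := by
  have hlog2 : 0 < log 2 := log_pos one_lt_two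
  set c := log 2 / (log 2 + ε / 2)
  have hc0 : 0 < c := by positivity
  have hc1 : c < 1 := (div_lt_one (by positivity)).2 (by linarith)
  have herr : Tendsto (fun n : ℕ => 2 * log (log n) ^ 2 / log n ^ (1 - c)) atTop (𝓝 0) := by
    simpa [mul_div_assoc] using
      ((tendsto_log_sq_div_rpow_atTop (sub_pos.2 hc1)).comp tendsto_log_natCast_atTop).const_mul 2
  filter_upwards [herr.eventually (gt_mem_nhds (half_pos hε)),
    tendsto_log_natCast_atTop.eventually_ge_atTop 3] with n hsmall hn
  have hlog2c : log 2 / c = log 2 + ε / 2 := div_div_cancel₀ hlog2.ne'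
  linarith [divisorRatio_le hn hc0]

theorem eventually_divisorRatio_nonneg : ∀ᶠ n : ℕ in atTop, 0 ≤ divisorRatio n := by
  filter_upwards [tendsto_log_natCast_atTop.eventually_ge_atTop 1] with n hn
  exact div_nonneg (mul_nonneg (log_natCast_nonneg _) (log_nonneg hn)) (by linarith)

theorem log_two_mul_log_theta_div_log_le_divisorRatio_primorial {n : ℕ} (h : 1 ≤ θ n) :
    log 2 * (log (θ n) / log n) ≤ divisorRatio (primorial n) := by
  have hθ : log (primorial n) = θ n := by rw [theta_eq_log_primorial, Nat.floor_natCast]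
  have hle : θ n ≤ n.primeCounting * log n := theta_le_pi_mul_log n
  have hlogn : 0 < log n := by
    by_contra! h'
    nlinarith [mul_nonpos_of_nonneg_of_nonpos (Nat.cast_nonneg n.primeCounting) h']
  have hnum : 0 ≤ log 2 * log (θ n) := mul_nonneg (log_nonneg one_le_two) (log_nonneg h)
  unfold divisorRatio
  rw [Nat.card_divisors_primorial, hθ, Nat.cast_pow, Nat.cast_ofNat, log_pow, mul_div_assoc',
    div_le_div_iff₀ hlogn (by linarith)]
  nlinarith [mul_le_mul_of_nonneg_left hle hnum]

theorem frequently_le_divisorRatio {ε : ℝ} (hε : 0 < ε) :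
    ∃ᶠ n : ℕ in atTop, log 2 - ε ≤ divisorRatio n := by
  have hlim : Tendsto (fun n : ℕ => log 2 * (1 - log 4 / log n)) atTop (𝓝 (log 2)) := by
    simpa using ((tendsto_const_nhds.div_atTop tendsto_log_natCast_atTop).const_sub 1).const_mul
      (log 2)
  have hev : ∀ᶠ n : ℕ in atTop, log 2 - ε ≤ divisorRatio (primorial n) := by
    filter_upwards [hlim.eventually (lt_mem_nhds (sub_lt_self _ hε)), eventually_div_four_le_theta,
      eventually_ge_atTop 4, tendsto_log_natCast_atTop.eventually_gt_atTop 0]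
      with n hlower hθ hn4 hlogn
    have hθ1 : 1 ≤ θ n := le_trans (by rw [le_div_iff₀ four_pos]; exact_mod_cast hn4) hθ
    refine hlower.le.trans (le_trans ?_
      (log_two_mul_log_theta_div_log_le_divisorRatio_primorial hθ1))
    gcongr
    rw [one_sub_div hlogn.ne', ← log_div (by positivity) four_ne_zero]
    gcongr
  exact (tendsto_atTop_mono (fun _ => le_primorial_self) tendsto_id).frequently hev.frequently

/-- **Wigert.**
`limsup_{n → ∞} (log d(n) · log log n)/(log n) = log 2`. -/
theorem wigert_limsup_divisor :
    limsup (fun n : ℕ =>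
        Real.log (n.divisors.card) * Real.log (Real.log n) / Real.log n) atTop =
      Real.log 2 := by
  change limsup divisorRatio atTop = log 2
  have hbdd : IsBoundedUnder (· ≤ ·) atTop divisorRatio :=
    isBoundedUnder_of_eventually_le (eventually_divisorRatio_le one_pos)
  have hcobdd : IsCoboundedUnder (· ≤ ·) atTop divisorRatio :=
    isCoboundedUnder_le_of_eventually_le atTop eventually_divisorRatio_nonneg
  refine le_antisymm (le_of_forall_pos_le_add fun ε hε => ?_)
    (le_of_forall_pos_le_add fun ε hε => ?_)
  · exact limsup_le_of_le hcobdd (eventually_divisorRatio_le hε)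
  · linarith [le_limsup_of_frequently_le (frequently_le_divisorRatio hε) hbdd]
end
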